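/- arXiv:2210.08167 — 5 statements merged into one kernel-verified Lean document; each statement's English description precedes it below -/
import Mathlib

section
/- Fix a nonempty finite set Q of positive integers with largest element q. There is a bijection between the k-element subsets S of {1,...,n} satisfying |x - y| ∉ Q for all x, y in S, and the restricted-overlap tilings of an (n+q)-board using squares and k copies of the comb corresponding to Q, where a comb is placed with its leftmost cell at cell i for each i ∈ S. -/
/-- The filled cells (as offsets from the leftmost cell) of the comb corresponding to
a set `Q` with largest element `q`: cells `0` and `q` are filled, and cell `i`
(for `0 < i < q`) is filled iff `i ∈ Q`. -/
def combCells (Q : Finset ℕ) (q : ℕ) : Finset ℕ := insert 0 (insert q Q)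

/-- A restricted-overlap tiling of an `m`-board (cells numbered `1,...,m`) with squares
and combs corresponding to `Q` (largest element `q`), recorded by the set `T` of
positions of the leftmost cells of the combs.  Each comb must fit on the board, and
the leftmost cell of each tile must be empty, i.e. not covered by any other comb
(the remaining, non-leftmost, cells of tiles may overlap non-leftmost filled cells of
tiles already placed); all cells not covered by combs are filled by squares. -/
def IsRTiling (Q : Finset ℕ) (q m : ℕ) (T : Finset ℕ) : Prop :=
  (∀ x ∈ T, 1 ≤ x ∧ x + q ≤ m) ∧
  ∀ x ∈ T, ∀ y ∈ T, x < y → y - x ∉ combCells Q q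

/-- Bijection between `k`-subsets of `{1,...,n}` with no two elements differing by an
element of `Q` and restricted-overlap tilings of an `(n+q)`-board with squares and `k`
combs corresponding to `Q`, where a comb is placed with its leftmost cell at cell `i`
for each `i` in the subset. -/
theorem stmt_4 (n q k : ℕ) (Q : Finset ℕ) (hQne : Q.Nonempty)
    (hQ : Q ⊆ Finset.Icc 1 q) (hq : q ∈ Q) :
    ∃ e : {S : Finset ℕ // S ⊆ Finset.Icc 1 n ∧ S.card = k ∧
            ∀ x ∈ S, ∀ y ∈ S, x < y → y - x ∉ Q} ≃
          {T : Finset ℕ // IsRTiling Q q (n + q) T ∧ T.card = k},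
      ∀ S, ((e S : Finset ℕ)) = (S : Finset ℕ) := by
  have key : ∀ S : Finset ℕ,
      (S ⊆ Finset.Icc 1 n ∧ S.card = k ∧ ∀ x ∈ S, ∀ y ∈ S, x < y → y - x ∉ Q) ↔
      (IsRTiling Q q (n + q) S ∧ S.card = k) := by
    intro S
    constructor
    · rintro ⟨hsub, hc, hd⟩
      refine ⟨⟨fun x hx => ?_, fun x hx y hy hxy hm => ?_⟩, hc⟩
      · have := hsub hx
        simp only [Finset.mem_Icc] at this
        omega
      · have h1 : 1 ≤ y - x := by omega
        simp only [combCells, Finset.mem_insert] at hm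
        rcases hm with h | h | h
        · omega
        · exact hd x hx y hy hxy (h ▸ hq)
        · exact hd x hx y hy hxy h
    · rintro ⟨⟨hb, hd⟩, hc⟩
      refine ⟨fun x hx => ?_, hc, fun x hx y hy hxy hm => ?_⟩
      · have := hb x hx
        simp only [Finset.mem_Icc]
        omega
      · exact hd x hx y hy hxy (by simp [combCells, hm])
  exact ⟨Equiv.subtypeEquiv (Equiv.refl _) key, fun S => rfl⟩
end

section
/- If the elements of Q (with largest element q) form a well-based sequence and p_1 < ... < p_a are the elements of {1,...,q} \ Q, then B_n = δ_{n,0} + B_{n-1} + B_{n-q-1} + Σ_{i=1}^a (B_{n-p_i} - B_{n-p_i-1} - δ_{n,p_i}), where B_n counts restricted-overlap tilings of an n-board with squares and combs corresponding to Q, and B_n = 0 for n < 0. -/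
/-- A set `Q` of positive integers is well-based if `1 ∈ Q` and for every `b ∈ Q` and
every `Δ` with `1 ≤ Δ ≤ b - 1` there is some `a ∈ Q` with `b = a + Δ`. -/
def WellBased (Q : Finset ℕ) : Prop :=
  1 ∈ Q ∧ ∀ b ∈ Q, ∀ d, 1 ≤ d → d < b → ∃ a ∈ Q, b = a + d

/-! A set `T` of comb positions is a tiling of the `n`-board iff `T ⊆ [1, n - q]` and no
difference of two elements of `T` lies in `Q`. Classify such sets by their largest element
`m`: removing `m` leaves either a set inside `[1, m - q - 1]`, or a set whose largest element
is `m - p` with `p ∈ [1, q] \ Q`. Conversely `m` may be added to any such set, because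
well-basedness gives `p + d ∉ Q` whenever `p ∉ Q` and `d ≥ 1`. The recurrence for `B` is this
decomposition in telescoped form: `B n - B (n - 1) - δ_{n,0}` counts the tilings whose last
comb starts at `n - q`. -/

open Finset

def IsAdmissible (Q S : Finset ℕ) : Prop :=
  ∀ x ∈ S, ∀ y ∈ S, x < y → y - x ∉ Q

instance (Q S : Finset ℕ) : Decidable (IsAdmissible Q S) := by
  unfold IsAdmissible; infer_instance

def admissibleSets (Q : Finset ℕ) (k : ℕ) : Finset (Finset ℕ) :=
  (Icc 1 k).powerset.filter (IsAdmissible Q)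

def admissibleSetsWithMax (Q : Finset ℕ) (k : ℕ) : Finset (Finset ℕ) :=
  (admissibleSets Q k).filter (k ∈ ·)

def rTilingCount (Q : Finset ℕ) (q : ℕ) (n : ℤ) : ℤ :=
  if n < 0 then 0 else #(admissibleSets Q (n - q).toNat)

section

variable {Q : Finset ℕ} {q : ℕ}

theorem WellBased.add_notMem (hwb : WellBased Q) {a b : ℕ} (ha : 0 < a) (hb : 0 < b)
    (haQ : a ∉ Q) : a + b ∉ Q := by
  intro hab
  obtain ⟨c, hc, hcab⟩ := hwb.2 (a + b) hab b hb (by omega)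
  exact haQ (by rwa [show a = c by omega])

theorem isRTiling_iff (hq : q ∈ Q) {n : ℕ} {T : Finset ℕ} :
    IsRTiling Q q n T ↔ T ⊆ Icc 1 (n - q) ∧ IsAdmissible Q T := by
  have hcomb : ∀ x y : ℕ, x < y → (y - x ∉ combCells Q q ↔ y - x ∉ Q) := by
    intro x y hxy
    simp only [combCells, mem_insert, not_or]
    exact ⟨fun h => h.2.2, fun h => ⟨by omega, fun hq' => h (hq' ▸ hq), h⟩⟩
  unfold IsRTiling IsAdmissible
  refine and_congr ?_ (forall₂_congr fun x _ => forall₂_congr fun y _ =>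
    imp_congr_right (hcomb x y))
  refine forall₂_congr fun x _ => ?_
  rw [mem_Icc]
  omega

theorem IsAdmissible.mono {S T : Finset ℕ} (hT : IsAdmissible Q T) (hST : S ⊆ T) :
    IsAdmissible Q S :=
  fun x hx y hy => hT x (hST hx) y (hST hy)

theorem isAdmissible_insert {S : Finset ℕ} {m : ℕ} (hS : ∀ y ∈ S, y < m) :
    IsAdmissible Q (insert m S) ↔ IsAdmissible Q S ∧ ∀ y ∈ S, m - y ∉ Q := by
  refine ⟨fun h => ⟨h.mono (subset_insert m S),
    fun y hy => h y (mem_insert_of_mem hy) m (mem_insert_self m S) (hS y hy)⟩, ?_⟩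
  rintro ⟨hadm, hm⟩ x hx y hy hxy
  rcases mem_insert.1 hy with rfl | hyS
  · rcases mem_insert.1 hx with rfl | hxS
    · omega
    · exact hm x hxS
  · rcases mem_insert.1 hx with rfl | hxS
    · exact absurd (hS y hyS) (by omega)
    · exact hadm x hxS y hyS hxy

theorem mem_admissibleSets {k : ℕ} {S : Finset ℕ} :
    S ∈ admissibleSets Q k ↔ S ⊆ Icc 1 k ∧ IsAdmissible Q S := by
  rw [admissibleSets, mem_filter, mem_powerset]

theorem mem_admissibleSetsWithMax {k : ℕ} {S : Finset ℕ} :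
    S ∈ admissibleSetsWithMax Q k ↔ S ⊆ Icc 1 k ∧ IsAdmissible Q S ∧ k ∈ S := by
  rw [admissibleSetsWithMax, mem_filter, mem_admissibleSets, and_assoc]

theorem admissibleSets_zero : admissibleSets Q 0 = {∅} := by
  simp [admissibleSets, IsAdmissible]

theorem admissibleSetsWithMax_zero : admissibleSetsWithMax Q 0 = ∅ := by
  simp [admissibleSetsWithMax, admissibleSets_zero]

theorem card_admissibleSets_eq (k : ℕ) :
    #(admissibleSets Q k) = #(admissibleSets Q (k - 1)) + #(admissibleSetsWithMax Q k) := by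
  rw [admissibleSetsWithMax, ← card_filter_add_card_filter_not (k ∈ ·), add_comm]
  congr 2
  ext S
  simp only [mem_filter, mem_admissibleSets, subset_iff, mem_Icc]
  constructor
  · rintro ⟨⟨hS, hadm⟩, hk⟩
    refine ⟨fun y hy => ?_, hadm⟩
    have hyk : y ≠ k := by rintro rfl; exact hk hy
    have := hS hy
    omega
  · rintro ⟨hS, hadm⟩
    refine ⟨⟨fun y hy => ⟨(hS hy).1, ?_⟩, hadm⟩, fun hk => ?_⟩
    · have := hS hy
      omega
    · have := hS hk
      omega

theorem disjoint_admissibleSets_admissibleSetsWithMax {j k : ℕ} (hjk : j < k) :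
    Disjoint (admissibleSets Q j) (admissibleSetsWithMax Q k) := by
  refine disjoint_left.2 fun S hj hk => ?_
  have := mem_Icc.1 ((mem_admissibleSets.1 hj).1 (mem_admissibleSetsWithMax.1 hk).2.2)
  omega

theorem disjoint_admissibleSetsWithMax {j k : ℕ} (hjk : j ≠ k) :
    Disjoint (admissibleSetsWithMax Q j) (admissibleSetsWithMax Q k) := by
  refine disjoint_left.2 fun S hj hk => ?_
  rw [mem_admissibleSetsWithMax] at hj hk
  have := mem_Icc.1 (hj.1 hk.2.2)
  have := mem_Icc.1 (hk.1 hj.2.2)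
  omega

theorem mem_image_erase_admissibleSetsWithMax {m : ℕ} (hm : 1 ≤ m) {S : Finset ℕ} :
    S ∈ (admissibleSetsWithMax Q m).image (·.erase m) ↔
      S ∈ admissibleSets Q (m - 1) ∧ ∀ y ∈ S, m - y ∉ Q := by
  rw [mem_image, mem_admissibleSets]
  constructor
  · rintro ⟨T, hT, rfl⟩
    obtain ⟨hTsub, hTadm, hmT⟩ := mem_admissibleSetsWithMax.1 hT
    have hlt : ∀ y ∈ T.erase m, y < m := fun y hy => by
      have := mem_Icc.1 (hTsub (mem_of_mem_erase hy))
      have := ne_of_mem_erase hy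
      omega
    rw [← insert_erase hmT, isAdmissible_insert hlt] at hTadm
    refine ⟨⟨fun y hy => mem_Icc.2 ⟨?_, ?_⟩, hTadm.1⟩, hTadm.2⟩
    · exact (mem_Icc.1 (hTsub (mem_of_mem_erase hy))).1
    · have := hlt y hy
      omega
  · rintro ⟨⟨hSsub, hSadm⟩, hmS⟩
    have hlt : ∀ y ∈ S, y < m := fun y hy => by
      have := mem_Icc.1 (hSsub hy)
      omega
    refine ⟨insert m S, ?_, erase_insert fun h => lt_irrefl m (hlt m h)⟩
    rw [mem_admissibleSetsWithMax, isAdmissible_insert hlt, insert_subset_iff]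
    exact ⟨⟨mem_Icc.2 ⟨hm, le_rfl⟩, hSsub.trans (Icc_subset_Icc_right (Nat.sub_le m 1))⟩,
      ⟨hSadm, hmS⟩, mem_insert_self m S⟩

theorem admissible_extendable_iff (hQ : ∀ x ∈ Q, x ≤ q) (hwb : WellBased Q) {m : ℕ}
    {S : Finset ℕ} :
    (S ∈ admissibleSets Q (m - 1) ∧ ∀ y ∈ S, m - y ∉ Q) ↔
      S ∈ admissibleSets Q (m - (q + 1)) ∨
        ∃ p ∈ Icc 1 q \ Q, S ∈ admissibleSetsWithMax Q (m - p) := by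
  simp only [mem_admissibleSets, mem_admissibleSetsWithMax, mem_sdiff, mem_Icc, subset_iff]
  constructor
  · rintro ⟨⟨hSsub, hSadm⟩, hcompat⟩
    by_cases hfar : ∀ y ∈ S, y ≤ m - (q + 1)
    · exact Or.inl ⟨fun y hy => ⟨(hSsub hy).1, hfar y hy⟩, hSadm⟩
    push Not at hfar
    obtain ⟨y₀, hy₀, hy₀far⟩ := hfar
    have hne : S.Nonempty := ⟨y₀, hy₀⟩
    set y₁ := S.max' hne
    have hy₁ : y₁ ∈ S := max'_mem S hne
    have hle : ∀ y ∈ S, y ≤ y₁ := fun y hy => le_max' S y hy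
    have := hSsub hy₁
    have := hle y₀ hy₀
    refine Or.inr ⟨m - y₁, ⟨⟨by omega, by omega⟩, hcompat y₁ hy₁⟩, ?_⟩
    rw [show m - (m - y₁) = y₁ by omega]
    exact ⟨fun y hy => ⟨(hSsub hy).1, hle y hy⟩, hSadm, hy₁⟩
  · rintro (⟨hSsub, hSadm⟩ | ⟨p, ⟨⟨hp1, hpq⟩, hpQ⟩, hSsub, hSadm, hmpS⟩)
    · refine ⟨⟨fun y hy => ⟨(hSsub hy).1, by have := hSsub hy; omega⟩, hSadm⟩,
        fun y hy hQy => ?_⟩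
      have := hQ _ hQy
      have := hSsub hy
      omega
    · have := hSsub hmpS
      refine ⟨⟨fun y hy => ⟨(hSsub hy).1, by have := hSsub hy; omega⟩, hSadm⟩,
        fun y hy => ?_⟩
      have := hSsub hy
      obtain hy | hy := (hSsub hy).2.eq_or_lt
      · rwa [show m - y = p by omega]
      · rw [show m - y = p + (m - p - y) by omega]
        exact hwb.add_notMem hp1 (by omega) hpQ

theorem card_admissibleSetsWithMax (hQ : ∀ x ∈ Q, x ≤ q) (hwb : WellBased Q) {m : ℕ}
    (hm : 1 ≤ m) :
    #(admissibleSetsWithMax Q m) = #(admissibleSets Q (m - (q + 1))) +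
      ∑ p ∈ Icc 1 q \ Q, #(admissibleSetsWithMax Q (m - p)) := by
  have himage : (admissibleSetsWithMax Q m).image (·.erase m) =
      admissibleSets Q (m - (q + 1)) ∪
        (Icc 1 q \ Q).biUnion fun p => admissibleSetsWithMax Q (m - p) := by
    ext S
    rw [mem_image_erase_admissibleSetsWithMax hm, admissible_extendable_iff hQ hwb, mem_union,
      mem_biUnion]
  have hinj : Set.InjOn (·.erase m) (admissibleSetsWithMax Q m : Set (Finset ℕ)) :=
    (erase_injOn' m).mono fun S hS => (mem_admissibleSetsWithMax.1 hS).2.2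
  rw [← card_image_of_injOn hinj, himage, card_union_of_disjoint, card_biUnion]
  · intro p₁ hp₁ p₂ hp₂ hne
    -- distinct `p` can give the same `m - p` only by truncation to `0`
    change Disjoint (admissibleSetsWithMax Q (m - p₁)) (admissibleSetsWithMax Q (m - p₂))
    by_cases heq : m - p₁ = m - p₂
    · rw [heq, show m - p₂ = 0 by omega, admissibleSetsWithMax_zero]
      exact disjoint_empty_left _
    · exact disjoint_admissibleSetsWithMax heq
  · refine (disjoint_biUnion_right _ _ _).2 fun p hp => ?_
    obtain h | h := Nat.eq_zero_or_pos (m - p)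
    · rw [h, admissibleSetsWithMax_zero]
      exact disjoint_empty_right _
    · have := (mem_Icc.1 (mem_sdiff.1 hp).1).2
      exact disjoint_admissibleSets_admissibleSetsWithMax (by omega)

open scoped Classical in
theorem card_filter_isRTiling (hq : q ∈ Q) (n : ℕ) :
    #((Icc 1 n).powerset.filter (fun T => IsRTiling Q q n T)) = #(admissibleSets Q (n - q)) := by
  congr 1
  ext T
  rw [mem_filter, mem_powerset, isRTiling_iff hq, mem_admissibleSets]
  exact ⟨fun h => h.2, fun h => ⟨h.1.trans (Icc_subset_Icc_right (Nat.sub_le n q)), h⟩⟩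

theorem rTilingCount_natCast (n : ℕ) : rTilingCount Q q n = #(admissibleSets Q (n - q)) := by
  rw [rTilingCount, if_neg (by omega), show ((n : ℤ) - q).toNat = n - q by omega]

theorem rTilingCount_of_neg {n : ℤ} (hn : n < 0) : rTilingCount Q q n = 0 :=
  if_pos hn

theorem rTilingCount_sub_rTilingCount_sub_one (n : ℤ) :
    rTilingCount Q q n - rTilingCount Q q (n - 1) - (if n = 0 then 1 else 0) =
      #(admissibleSetsWithMax Q (n - q).toNat) := by
  rcases lt_or_ge n 0 with hn | hn
  · rw [rTilingCount_of_neg hn, rTilingCount_of_neg (by omega), if_neg hn.ne,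
      show (n - q).toNat = 0 by omega, admissibleSetsWithMax_zero]
    simp
  lift n to ℕ using hn
  rcases Nat.eq_zero_or_pos n with rfl | hn
  · have h0 := rTilingCount_natCast (Q := Q) (q := q) 0
    rw [Nat.zero_sub, admissibleSets_zero, card_singleton, Nat.cast_zero, Nat.cast_one] at h0
    simp [h0, rTilingCount_of_neg, admissibleSetsWithMax_zero]
  · rw [rTilingCount_natCast, show (n : ℤ) - 1 = ((n - 1 : ℕ) : ℤ) by omega,
      rTilingCount_natCast, card_admissibleSets_eq (n - q), if_neg (by omega),
      show n - 1 - q = n - q - 1 by omega, show ((n : ℤ) - q).toNat = n - q by omega]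
    push_cast
    ring

theorem card_admissibleSetsWithMax_toNat (hQ : ∀ x ∈ Q, x ≤ q) (hwb : WellBased Q) (n : ℤ) :
    (#(admissibleSetsWithMax Q (n - q).toNat) : ℤ) = rTilingCount Q q (n - q - 1) +
      ∑ p ∈ Icc 1 q \ Q, (#(admissibleSetsWithMax Q (n - p - q).toNat) : ℤ) := by
  rcases le_or_gt n q with hn | hn
  · have hzero : ∀ p : ℕ, (n - p - q).toNat = 0 := fun p => by omega
    simp only [hzero, show (n - q).toNat = 0 by omega, admissibleSetsWithMax_zero,
      card_empty, rTilingCount_of_neg (show n - q - 1 < 0 by omega)]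
    simp
  · obtain ⟨m, rfl⟩ : ∃ m : ℕ, n = q + m := ⟨(n - q).toNat, by omega⟩
    have hsub : ∀ p : ℕ, ((q : ℤ) + m - p - q).toNat = m - p := fun p => by omega
    rw [show ((q : ℤ) + m - q).toNat = m by omega,
      show (q : ℤ) + m - q - 1 = ((m - 1 : ℕ) : ℤ) by omega, rTilingCount_natCast,
      card_admissibleSetsWithMax hQ hwb (by omega), show m - 1 - q = m - (q + 1) by omega]
    simp only [hsub]
    push_cast
    rfl

end

open scoped Classical in
/-- If the elements of `Q` (largest element `q`) form a well-based sequence and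
`p_1 < ... < p_a` are the elements of `{1,...,q} \ Q`, then the number `B n` of
restricted-overlap tilings of an `n`-board with squares and combs corresponding to `Q`
(with `B n = 0` for `n < 0`) satisfies
`B n = δ_{n,0} + B_{n-1} + B_{n-q-1} + Σ_{i=1}^a (B_{n-p_i} - B_{n-p_i-1} - δ_{n,p_i})`. -/
theorem stmt_11 (q : ℕ) (Q : Finset ℕ) (hQ : Q ⊆ Finset.Icc 1 q) (hq : q ∈ Q)
    (hwb : WellBased Q) (B : ℤ → ℤ)
    (hBneg : ∀ n : ℤ, n < 0 → B n = 0)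
    (hB : ∀ n : ℕ, B n =
      ((Finset.Icc 1 n).powerset.filter (fun T => IsRTiling Q q n T)).card) :
    ∀ n : ℤ, B n = (if n = 0 then 1 else 0) + B (n - 1) + B (n - q - 1)
      + ∑ p ∈ Finset.Icc 1 q \ Q,
          (B (n - p) - B (n - p - 1) - if n = (p : ℤ) then 1 else 0) := by
  have hBcount : B = rTilingCount Q q := funext fun n => by
    rcases lt_or_ge n 0 with hn | hn
    · rw [hBneg n hn, rTilingCount_of_neg hn]
    · lift n to ℕ using hn
      rw [hB, card_filter_isRTiling hq, rTilingCount_natCast]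
  subst hBcount
  intro n
  have hsum : ∀ p ∈ Icc 1 q \ Q, rTilingCount Q q (n - p) - rTilingCount Q q (n - p - 1) -
      (if n = p then 1 else 0) = #(admissibleSetsWithMax Q (n - p - q).toNat) := fun p _ => by
    rw [← rTilingCount_sub_rTilingCount_sub_one]
    simp only [sub_eq_zero]
  rw [sum_congr rfl hsum]
  linarith [rTilingCount_sub_rTilingCount_sub_one (Q := Q) (q := q) n,
    card_admissibleSetsWithMax_toNat (fun x hx => (mem_Icc.1 (hQ hx)).2) hwb n]
end

section
/- If the elements q_1 < ... < q_t of Q form a well-based sequence, then the generating function of S_n (the number of subsets of {1,...,n} with no two elements differing by an element of Q) is G(x) = c / ((1-x)c - x), where c = 1 + Σ_{i=1}^t x^{q_i}. -/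
open Finset hiding mk
open PowerSeries

def DiffFree (Q A : Finset ℕ) : Prop := ∀ x ∈ A, ∀ y ∈ A, x < y → y - x ∉ Q

instance (Q : Finset ℕ) : DecidablePred (DiffFree Q) := fun A => by
  unfold DiffFree; infer_instance

def diffFreeSets (Q : Finset ℕ) (n : ℕ) : Finset (Finset ℕ) :=
  (Icc 1 n).powerset.filter (DiffFree Q)

/-- `A.sup id` is the maximum of `A`, and `∅.sup id = 0`: so `diffFreeSetsWithMax Q 0 = {∅}`. -/
def diffFreeSetsWithMax (Q : Finset ℕ) (n : ℕ) : Finset (Finset ℕ) :=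
  (diffFreeSets Q n).filter (fun A => A.sup id = n)

section Combinatorics

variable {Q A : Finset ℕ} {n : ℕ}

theorem DiffFree.mono {B : Finset ℕ} (hB : DiffFree Q B) (hAB : A ⊆ B) : DiffFree Q A :=
  fun x hx y hy => hB x (hAB hx) y (hAB hy)

theorem diffFree_insert_iff (hA : DiffFree Q A) (hlt : ∀ x ∈ A, x < n) :
    DiffFree Q (insert n A) ↔ ∀ x ∈ A, n - x ∉ Q := by
  refine ⟨fun h x hx => h x (mem_insert_of_mem hx) n (mem_insert_self n A) (hlt x hx), ?_⟩
  intro h x hx y hy hxy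
  rcases mem_insert.1 hx with hxn | hx
  · rcases mem_insert.1 hy with hyn | hy
    · omega
    · have := hlt y hy; omega
  · rcases mem_insert.1 hy with hyn | hy
    · exact hyn ▸ h x hx
    · exact hA x hx y hy hxy

/-- A larger `y ∈ A` would split `n - x = (y - x) + (n - y)` with `y - x ∈ Q`. -/
theorem WellBased.le_of_sub_mem (hwb : WellBased Q) (hA : DiffFree Q A) (hlt : ∀ y ∈ A, y < n)
    {x : ℕ} (hx : x ∈ A) (hq : n - x ∈ Q) {y : ℕ} (hy : y ∈ A) : y ≤ x := by
  by_contra! hxy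
  have hyn := hlt y hy
  obtain ⟨a, ha, hsplit⟩ := hwb.2 (n - x) hq (n - y) (by omega) (by omega)
  exact hA x hx y hy hxy (by rwa [show y - x = a by omega])

theorem mem_diffFreeSets : A ∈ diffFreeSets Q n ↔ A ⊆ Icc 1 n ∧ DiffFree Q A := by
  simp [diffFreeSets]

theorem mem_diffFreeSetsWithMax :
    A ∈ diffFreeSetsWithMax Q n ↔ A ⊆ Icc 1 n ∧ DiffFree Q A ∧ A.sup id = n := by
  simp [diffFreeSetsWithMax, mem_diffFreeSets, and_assoc]

theorem sup_id_eq_iff_mem (hA : A ⊆ Icc 1 n) (hn : n ≠ 0) : A.sup id = n ↔ n ∈ A := by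
  refine ⟨fun h => ?_, fun h => le_antisymm (Finset.sup_le fun x hx => (mem_Icc.1 (hA hx)).2)
    (le_sup (f := id) h)⟩
  obtain ⟨x, hx, hsup⟩ := exists_mem_eq_sup A (nonempty_iff_ne_empty.2 fun h' => by
    simp [h'] at h; omega) id
  exact h ▸ hsup ▸ hx

theorem card_diffFreeSets_zero : #(diffFreeSets Q 0) = 1 := by
  rw [card_eq_one]
  exact ⟨∅, eq_singleton_iff_unique_mem.2 ⟨by simp [mem_diffFreeSets, DiffFree],
    fun A hA => by simpa using (mem_diffFreeSets.1 hA).1⟩⟩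

theorem card_diffFreeSetsWithMax_zero : #(diffFreeSetsWithMax Q 0) = 1 := by
  rw [diffFreeSetsWithMax, filter_true_of_mem, card_diffFreeSets_zero]
  intro A hA
  simp [subset_empty.1 (by simpa using (mem_diffFreeSets.1 hA).1 : A ⊆ ∅)]

theorem card_diffFreeSets_succ :
    #(diffFreeSets Q (n + 1)) = #(diffFreeSets Q n) + #(diffFreeSetsWithMax Q (n + 1)) := by
  rw [← card_filter_add_card_filter_not (fun A => A.sup id = n + 1), add_comm]
  congr 2
  ext A
  simp only [mem_filter, mem_diffFreeSets]
  constructor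
  · rintro ⟨⟨hA, hfree⟩, hsup⟩
    refine ⟨fun x hx => ?_, hfree⟩
    have hx' := mem_Icc.1 (hA hx)
    have : x ≠ n + 1 := fun h => hsup ((sup_id_eq_iff_mem hA n.succ_ne_zero).2 (h ▸ hx))
    exact mem_Icc.2 ⟨hx'.1, by omega⟩
  · rintro ⟨hA, hfree⟩
    have hA' : A ⊆ Icc 1 (n + 1) := hA.trans (Icc_subset_Icc_right n.le_succ)
    refine ⟨⟨hA', hfree⟩, fun h => ?_⟩
    have := mem_Icc.1 (hA ((sup_id_eq_iff_mem hA' n.succ_ne_zero).1 h))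
    omega

theorem card_filter_diffFree_insert (m : ℕ) :
    #((diffFreeSets Q m).filter (fun A => DiffFree Q (insert (m + 1) A))) =
      #(diffFreeSetsWithMax Q (m + 1)) := by
  have hnotMem : ∀ {A}, A ⊆ Icc 1 m → m + 1 ∉ A := fun hA h => by
    have := mem_Icc.1 (hA h); omega
  apply card_nbij' (insert (m + 1)) (fun B => B.erase (m + 1))
  · intro A hA
    simp only [coe_filter, Set.mem_ofPred_eq, mem_diffFreeSets] at hA
    obtain ⟨⟨hA, -⟩, hfree⟩ := hA
    have hsub : insert (m + 1) A ⊆ Icc 1 (m + 1) :=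
      insert_subset (by simp) (hA.trans (Icc_subset_Icc_right m.le_succ))
    simp only [mem_coe, mem_diffFreeSetsWithMax]
    exact ⟨hsub, hfree, (sup_id_eq_iff_mem hsub m.succ_ne_zero).2 (mem_insert_self _ _)⟩
  · intro B hB
    simp only [mem_coe, mem_diffFreeSetsWithMax] at hB
    obtain ⟨hB, hfree, hsup⟩ := hB
    have hmem := (sup_id_eq_iff_mem hB m.succ_ne_zero).1 hsup
    simp only [coe_filter, Set.mem_ofPred_eq, mem_diffFreeSets, insert_erase hmem]
    refine ⟨⟨fun x hx => ?_, hfree.mono (erase_subset _ _)⟩, hfree⟩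
    obtain ⟨hxm, hx⟩ := mem_erase.1 hx
    have := mem_Icc.1 (hB hx)
    exact mem_Icc.2 ⟨this.1, by omega⟩
  · intro A hA
    simp only [coe_filter, Set.mem_ofPred_eq, mem_diffFreeSets] at hA
    exact erase_insert (hnotMem hA.1.1)
  · intro B hB
    simp only [mem_coe, mem_diffFreeSetsWithMax] at hB
    exact insert_erase ((sup_id_eq_iff_mem hB.1 m.succ_ne_zero).1 hB.2.2)

theorem WellBased.filter_not_diffFree_insert (hwb : WellBased Q) (h0 : 0 ∉ Q) (m : ℕ) :
    (diffFreeSets Q m).filter (fun A => ¬DiffFree Q (insert (m + 1) A)) =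
      (Q.filter (· ≤ m)).biUnion (fun q => diffFreeSetsWithMax Q (m + 1 - q)) := by
  ext A
  simp only [mem_filter, mem_biUnion, mem_diffFreeSets, mem_diffFreeSetsWithMax]
  constructor
  · rintro ⟨⟨hA, hfree⟩, hins⟩
    have hlt : ∀ x ∈ A, x < m + 1 := fun x hx => by have := mem_Icc.1 (hA hx); omega
    obtain ⟨x, hx, hq⟩ : ∃ x ∈ A, m + 1 - x ∈ Q := by
      simpa using mt (diffFree_insert_iff hfree hlt).2 hins
    have hx1 := mem_Icc.1 (hA hx)
    have hmax : ∀ y ∈ A, y ≤ x := fun y hy => hwb.le_of_sub_mem hfree hlt hx hq hy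
    refine ⟨m + 1 - x, ⟨hq, by omega⟩, ?_⟩
    rw [show m + 1 - (m + 1 - x) = x by omega]
    refine ⟨fun y hy => mem_Icc.2 ⟨(mem_Icc.1 (hA hy)).1, hmax y hy⟩, hfree, ?_⟩
    exact le_antisymm (Finset.sup_le hmax) (le_sup (f := id) hx)
  · rintro ⟨q, ⟨hq, hqm⟩, hA, hfree, hsup⟩
    have hq0 : q ≠ 0 := fun h => h0 (h ▸ hq)
    refine ⟨⟨hA.trans (Icc_subset_Icc_right (by omega)), hfree⟩, fun hins => ?_⟩
    have hx := (sup_id_eq_iff_mem hA (by omega)).1 hsup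
    exact hins _ (mem_insert_of_mem hx) _ (mem_insert_self _ _) (by omega)
      (by rwa [show m + 1 - (m + 1 - q) = q by omega])

theorem WellBased.card_diffFreeSets (hwb : WellBased Q) (h0 : 0 ∉ Q) (m : ℕ) :
    #(diffFreeSets Q m) = #(diffFreeSetsWithMax Q (m + 1)) +
      ∑ q ∈ Q.filter (· ≤ m), #(diffFreeSetsWithMax Q (m + 1 - q)) := by
  rw [← card_filter_add_card_filter_not (fun A => DiffFree Q (insert (m + 1) A)),
    card_filter_diffFree_insert, hwb.filter_not_diffFree_insert h0, card_biUnion]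
  intro q hq q' hq' hne
  simp only [coe_filter, Set.mem_ofPred_eq] at hq hq'
  refine disjoint_left.2 fun A hA hA' => hne ?_
  have := (mem_diffFreeSetsWithMax.1 hA).2.2.symm.trans (mem_diffFreeSetsWithMax.1 hA').2.2
  omega

end Combinatorics

section GeneratingFunction

variable {R : Type*} [CommRing R]

theorem PowerSeries.mk_mul_one_sub_X {a b : ℕ → R} (h0 : a 0 = b 0)
    (hsucc : ∀ n, a (n + 1) = a n + b (n + 1)) : mk a * (1 - X) = mk b := by
  ext (_ | n)
  · simp [h0]
  · rw [mul_sub, mul_one, map_sub, coeff_succ_mul_X, coeff_mk, coeff_mk, coeff_mk, hsucc]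
    ring

theorem PowerSeries.coeff_mk_mul_sum_X_pow (a : ℕ → R) (Q : Finset ℕ) (n : ℕ) :
    coeff n (mk a * ∑ q ∈ Q, X ^ q) = ∑ q ∈ Q with q ≤ n, a (n - q) := by
  simp only [mul_sum, map_sum, coeff_mul_X_pow', coeff_mk, sum_filter]

theorem PowerSeries.mk_mul_one_add_sum_X_pow_of_recurrence {Q : Finset ℕ} {s t : ℕ → R}
    (ht0 : t 0 = 1) (hts : ∀ m, s m = t (m + 1) + ∑ q ∈ Q with q ≤ m, t (m + 1 - q)) :
    mk t * (1 + ∑ q ∈ Q, X ^ q) = X * mk s + (1 + ∑ q ∈ Q, X ^ q) := by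
  ext (_ | m)
  · simp [ht0]
  · rw [mul_add, mul_one, map_add, coeff_mk_mul_sum_X_pow, coeff_mk, map_add, mul_comm,
      coeff_succ_mul_X, coeff_mk, map_add, coeff_one, if_neg m.succ_ne_zero, zero_add,
      map_sum, hts, add_assoc, sum_filter, sum_filter, add_left_cancel_iff, ← sum_add_distrib]
    refine sum_congr rfl fun q _ => ?_
    rw [coeff_X_pow]
    split_ifs <;> first | omega | simp_all

theorem PowerSeries.mk_eq_mul_inv_of_recurrence {K : Type*} [Field K] {Q : Finset ℕ}
    (h0 : 0 ∉ Q) {s t : ℕ → K} (hs0 : s 0 = 1) (ht0 : t 0 = 1)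
    (hst : ∀ n, s (n + 1) = s n + t (n + 1))
    (hts : ∀ m, s m = t (m + 1) + ∑ q ∈ Q with q ≤ m, t (m + 1 - q)) :
    mk s = (1 + ∑ q ∈ Q, X ^ q) * ((1 - X) * (1 + ∑ q ∈ Q, X ^ q) - X)⁻¹ := by
  set c : K⟦X⟧ := 1 + ∑ q ∈ Q, X ^ q
  have hc : constantCoeff ((1 - X) * c - X) = 1 := by
    have hQ : ∑ q ∈ Q, (0 : K) ^ q = 0 :=
      sum_eq_zero fun q hq => zero_pow (ne_of_mem_of_not_mem hq h0)
    simp [c, map_sum, hQ]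
  rw [eq_mul_inv_iff_mul_eq (by simp [hc])]
  calc mk s * ((1 - X) * c - X) = mk s * (1 - X) * c - X * mk s := by ring
    _ = c := by
      rw [mk_mul_one_sub_X (hs0.trans ht0.symm) hst, mk_mul_one_add_sum_X_pow_of_recurrence ht0 hts]
      ring

end GeneratingFunction

/-- If the elements of `Q` form a well-based sequence then the generating function of
`S_n`, the number of subsets of `{1,...,n}` with no two elements differing by an element
of `Q`, is `G(x) = c / ((1-x)c - x)` where `c = 1 + Σ_{i ∈ Q} x^i`. -/
theorem stmt_12 (Q : Finset ℕ) (hQpos : ∀ x ∈ Q, 0 < x) (hwb : WellBased Q)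
    (S : ℕ → ℕ)
    (hS : ∀ n, S n = ((Finset.Icc 1 n).powerset.filter
      (fun A => ∀ x ∈ A, ∀ y ∈ A, x < y → y - x ∉ Q)).card) :
    PowerSeries.mk (fun n : ℕ => (S n : ℚ)) =
      (1 + ∑ i ∈ Q, (PowerSeries.X : PowerSeries ℚ) ^ i) *
        ((1 - PowerSeries.X) * (1 + ∑ i ∈ Q, (PowerSeries.X : PowerSeries ℚ) ^ i)
          - PowerSeries.X)⁻¹ := by
  have h0 : 0 ∉ Q := fun h => lt_irrefl 0 (hQpos 0 h)
  have hS' : ∀ n, S n = #(diffFreeSets Q n) := fun n => by rw [hS]; rfl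
  simp only [hS']
  apply mk_eq_mul_inv_of_recurrence h0 (t := fun n => (#(diffFreeSetsWithMax Q n) : ℚ))
  · simp [card_diffFreeSets_zero]
  · simp [card_diffFreeSetsWithMax_zero]
  · intro n
    simp [card_diffFreeSets_succ]
  · intro m
    simp [hwb.card_diffFreeSets h0 m]
end

section
/- For j, m ≥ 1, there is a bijection between the subsets of {1,...,n} avoiding pairwise differences in {m, 2m, ..., jm} and the permutations π of {1,...,n+jm} satisfying π(i) - i ∈ {-m, 0, jm} for all i. Moreover, under this bijection, k-element subsets correspond to permutations with exactly k excedances (positions i with π(i) > i). -/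
namespace Stmt15Aux

lemma sub_one_mul_add {k m : ℕ} (hk : 1 ≤ k) : (k - 1) * m + m = k * m := by
  cases k with
  | zero => omega
  | succ n => simp [Nat.succ_sub_one, Nat.succ_mul]

lemma mod_gap {m a b : ℕ} (hm : 1 ≤ m) (hab : a < b) (h : a % m = b % m) : a + m ≤ b := by
  have hd : m ∣ b - a := (Nat.modEq_iff_dvd' hab.le).mp h
  have := Nat.le_of_dvd (by omega) hd
  omega

lemma hne_of {A : Finset ℕ} {j m : ℕ} (hm : 1 ≤ m)
    (h : ∀ x ∈ A, ∀ y ∈ A, x < y → y - x ∉ (Finset.Icc 1 j).image (· * m)) :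
    ∀ a ∈ A, ∀ b ∈ A, ∀ k, 1 ≤ k → k ≤ j → a ≠ b + k * m := by
  intro a ha b hb k hk1 hkj heq
  have hmk : 1 ≤ k * m := Nat.mul_pos hk1 hm
  have hba : b < a := by omega
  exact h b hb a ha hba (Finset.mem_image.mpr ⟨k, Finset.mem_Icc.mpr ⟨hk1, hkj⟩, by omega⟩)

open Classical in
noncomputable def pfun (A : Finset ℕ) (j m x : ℕ) : ℕ :=
  if x + 1 ∈ A then x + j * m
  else if ∃ a ∈ A, ∃ k, 1 ≤ k ∧ k ≤ j ∧ x + 1 = a + k * m then x - m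
  else x

open Classical in
noncomputable def qfun (A : Finset ℕ) (j m y : ℕ) : ℕ :=
  if ∃ a ∈ A, y + 1 = a + j * m then y - j * m
  else if ∃ a ∈ A, ∃ k, 1 ≤ k ∧ k ≤ j ∧ y + m + 1 = a + k * m then y + m
  else y

lemma pfun_lt {A : Finset ℕ} {n j m : ℕ} (hA : A ⊆ Finset.Icc 1 n) {x : ℕ}
    (hx : x < n + j * m) : pfun A j m x < n + j * m := by
  unfold pfun
  split_ifs with h1 h2
  · have := Finset.mem_Icc.mp (hA h1); omega
  · omega
  · omega

lemma qfun_lt {A : Finset ℕ} {n j m : ℕ} (hA : A ⊆ Finset.Icc 1 n) {y : ℕ}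
    (hy : y < n + j * m) : qfun A j m y < n + j * m := by
  unfold qfun
  split_ifs with h1 h2
  · omega
  · obtain ⟨a, ha, k, hk1, hkj, heq⟩ := h2
    have hb := Finset.mem_Icc.mp (hA ha)
    have : k * m ≤ j * m := Nat.mul_le_mul hkj le_rfl
    omega
  · omega

lemma qfun_pfun {A : Finset ℕ} {j m : ℕ} (hj : 1 ≤ j) (hm : 1 ≤ m)
    (hA1 : ∀ a ∈ A, 1 ≤ a)
    (hne : ∀ a ∈ A, ∀ b ∈ A, ∀ k, 1 ≤ k → k ≤ j → a ≠ b + k * m) (x : ℕ) :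
    qfun A j m (pfun A j m x) = x := by
  unfold pfun
  split_ifs with h1 h2
  · unfold qfun
    rw [if_pos ⟨x + 1, h1, by omega⟩]
    omega
  · obtain ⟨a, ha, k, hk1, hkj, heq⟩ := h2
    have ha1 := hA1 a ha
    have hmk : m ≤ k * m := by
      have := Nat.mul_le_mul hk1 (le_refl m); omega
    have hxm : m ≤ x := by omega
    have hc1 : ¬ ∃ b ∈ A, x - m + 1 = b + j * m := by
      rintro ⟨b, hb, hbeq⟩
      have hkm : k * m ≤ j * m := Nat.mul_le_mul hkj le_rfl
      have hq : (j + 1 - k) * m = j * m + m - k * m := by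
        rw [Nat.sub_mul, Nat.add_mul, one_mul]
      exact hne a ha b hb (j + 1 - k) (by omega) (by omega) (by omega)
    unfold qfun
    rw [if_neg hc1, if_pos ⟨a, ha, k, hk1, hkj, by omega⟩]
    omega
  · have hc1 : ¬ ∃ a ∈ A, x + 1 = a + j * m := by
      rintro ⟨a, ha, heq⟩
      exact h2 ⟨a, ha, j, hj, le_rfl, heq⟩
    have hc2 : ¬ ∃ a ∈ A, ∃ k, 1 ≤ k ∧ k ≤ j ∧ x + m + 1 = a + k * m := by
      rintro ⟨a, ha, k, hk1, hkj, heq⟩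
      rcases Nat.eq_or_lt_of_le hk1 with hk | hk
      · apply h1
        have h1m : 1 * m = m := one_mul m
        have : x + 1 = a := by subst hk; omega
        rwa [this]
      · refine h2 ⟨a, ha, k - 1, by omega, by omega, ?_⟩
        have := sub_one_mul_add (m := m) (show 1 ≤ k by omega)
        omega
    unfold qfun
    rw [if_neg hc1, if_neg hc2]

lemma pfun_qfun {A : Finset ℕ} {j m : ℕ} (hj : 1 ≤ j) (hm : 1 ≤ m)
    (hA1 : ∀ a ∈ A, 1 ≤ a)
    (hne : ∀ a ∈ A, ∀ b ∈ A, ∀ k, 1 ≤ k → k ≤ j → a ≠ b + k * m) (y : ℕ) :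
    pfun A j m (qfun A j m y) = y := by
  unfold qfun
  split_ifs with h1 h2
  · obtain ⟨a, ha, heq⟩ := h1
    have ha1 := hA1 a ha
    have hjm : 1 ≤ j * m := Nat.mul_pos hj hm
    have hy : j * m ≤ y := by omega
    unfold pfun
    rw [if_pos (show y - j * m + 1 ∈ A by
      have : y - j * m + 1 = a := by omega
      rwa [this])]
    omega
  · obtain ⟨a, ha, k, hk1, hkj, heq⟩ := h2
    have hc1 : ¬ (y + m + 1 ∈ A) := by
      intro hmem
      exact hne (y + m + 1) hmem a ha k hk1 hkj (by omega)
    unfold pfun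
    rw [if_neg hc1, if_pos ⟨a, ha, k, hk1, hkj, heq⟩]
    omega
  · have hc1 : ¬ (y + 1 ∈ A) := by
      intro hmem
      have h1m : 1 * m = m := one_mul m
      exact h2 ⟨y + 1, hmem, 1, le_rfl, hj, by omega⟩
    have hc2 : ¬ ∃ a ∈ A, ∃ k, 1 ≤ k ∧ k ≤ j ∧ y + 1 = a + k * m := by
      rintro ⟨a, ha, k, hk1, hkj, heq⟩
      rcases Nat.eq_or_lt_of_le hkj with hk | hk
      · exact h1 ⟨a, ha, by rw [← hk]; exact heq⟩
      · refine h2 ⟨a, ha, k + 1, by omega, by omega, ?_⟩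
        have : (k + 1) * m = k * m + m := by ring
        omega
    unfold pfun
    rw [if_neg hc1, if_neg hc2]

lemma pfun_cases {A : Finset ℕ} {j m : ℕ} (hA1 : ∀ a ∈ A, 1 ≤ a) (x : ℕ) :
    (x + 1 ∈ A ∧ pfun A j m x = x + j * m) ∨
    (m ≤ x ∧ pfun A j m x + m = x) ∨ pfun A j m x = x := by
  unfold pfun
  split_ifs with h1 h2
  · exact Or.inl ⟨h1, rfl⟩
  · obtain ⟨a, ha, k, hk1, hkj, heq⟩ := h2
    have := hA1 a ha
    have hmk : m ≤ k * m := by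
      have := Nat.mul_le_mul hk1 (le_refl m); omega
    exact Or.inr (Or.inl ⟨by omega, by omega⟩)
  · exact Or.inr (Or.inr rfl)

noncomputable def Fperm (n j m : ℕ) (hj : 1 ≤ j) (hm : 1 ≤ m) (A : Finset ℕ)
    (hA : A ⊆ Finset.Icc 1 n)
    (hne : ∀ a ∈ A, ∀ b ∈ A, ∀ k, 1 ≤ k → k ≤ j → a ≠ b + k * m) :
    Equiv.Perm (Fin (n + j * m)) where
  toFun i := ⟨pfun A j m i, pfun_lt hA i.isLt⟩
  invFun i := ⟨qfun A j m i, qfun_lt hA i.isLt⟩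
  left_inv i := Fin.ext (qfun_pfun hj hm (fun a ha => (Finset.mem_Icc.mp (hA ha)).1) hne i)
  right_inv i := Fin.ext (pfun_qfun hj hm (fun a ha => (Finset.mem_Icc.mp (hA ha)).1) hne i)

lemma Fperm_apply (n j m : ℕ) (hj : 1 ≤ j) (hm : 1 ≤ m) (A : Finset ℕ)
    (hA : A ⊆ Finset.Icc 1 n)
    (hne : ∀ a ∈ A, ∀ b ∈ A, ∀ k, 1 ≤ k → k ≤ j → a ≠ b + k * m)
    (i : Fin (n + j * m)) :
    (Fperm n j m hj hm A hA hne i : ℕ) = pfun A j m i := rfl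

lemma hopt_of {N j m : ℕ} (π : Equiv.Perm (Fin N))
    (hπ : ∀ i, ((π i : ℤ) - (i : ℤ)) ∈ ({-(m : ℤ), 0, (j * m : ℤ)} : Set ℤ)) (i : Fin N) :
    (π i : ℕ) + m = i ∨ (π i : ℕ) = i ∨ (π i : ℕ) = (i : ℕ) + j * m := by
  have h := hπ i
  simp only [Set.mem_insert_iff, Set.mem_singleton_iff] at h
  rcases h with h | h | h
  · left
    have : ((π i : ℕ) : ℤ) + (m : ℤ) = ((i : ℕ) : ℤ) := by push_cast at h ⊢; linarith
    exact_mod_cast this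
  · right; left
    have : ((π i : ℕ) : ℤ) = ((i : ℕ) : ℤ) := by push_cast at h ⊢; linarith
    exact_mod_cast this
  · right; right
    have : ((π i : ℕ) : ℤ) = ((i : ℕ) : ℤ) + ((j * m : ℕ) : ℤ) := by
      push_cast at h ⊢; linarith
    exact_mod_cast this

lemma hres {N j m : ℕ} (π : Equiv.Perm (Fin N))
    (hopt : ∀ i : Fin N, (π i : ℕ) + m = i ∨ (π i : ℕ) = i ∨ (π i : ℕ) = (i : ℕ) + j * m)
    (i : Fin N) : (π i : ℕ) % m = (i : ℕ) % m := by
  rcases hopt i with h | h | h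
  · conv_rhs => rw [← h]
    rw [Nat.add_mod_right]
  · rw [h]
  · rw [h, Nat.add_mul_mod_self_right]

lemma keyD {N : ℕ} (π : Equiv.Perm (Fin N)) (D : Finset (Fin N))
    (hmap : ∀ y ∈ D, π y ∈ D) : ∀ y, π y ∈ D → y ∈ D := by
  have himg : D.image π = D := by
    apply Finset.eq_of_subset_of_card_le
    · intro z hz
      simp only [Finset.mem_image] at hz
      obtain ⟨y, hy, rfl⟩ := hz
      exact hmap y hy
    · rw [Finset.card_image_of_injective _ π.injective]
  intro y hy
  rw [← himg] at hy
  obtain ⟨z, hz, hzz⟩ := Finset.mem_image.mp hy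
  rwa [← π.injective hzz]

lemma key1 {N j m : ℕ} (hm : 1 ≤ m) (π : Equiv.Perm (Fin N))
    (hopt : ∀ i : Fin N, (π i : ℕ) + m = i ∨ (π i : ℕ) = i ∨ (π i : ℕ) = (i : ℕ) + j * m)
    (u : Fin N) (hu : (π u : ℕ) = (u : ℕ) + j * m)
    (k : ℕ) (hk1 : 1 ≤ k) (hkj : k ≤ j) (h : (u : ℕ) + k * m < N) :
    (π ⟨(u : ℕ) + k * m, h⟩ : ℕ) + m = (u : ℕ) + k * m := by
  by_contra hcon
  set x : Fin N := ⟨(u : ℕ) + k * m, h⟩ with hx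
  have hs : (k - 1) * m + m = k * m := sub_one_mul_add hk1
  have hkm : k * m ≤ j * m := Nat.mul_le_mul hkj le_rfl
  set t : ℕ := (u : ℕ) + (k - 1) * m with ht
  set D : Finset (Fin N) :=
    Finset.univ.filter (fun y : Fin N => t < (y : ℕ) ∧ (y : ℕ) % m = (u : ℕ) % m) with hD
  have htm : t % m = (u : ℕ) % m := by rw [ht]; exact Nat.add_mul_mod_self_right ..
  have hmap : ∀ y ∈ D, π y ∈ D := by
    intro y hy
    rw [hD, Finset.mem_filter] at hy ⊢
    obtain ⟨-, hty, hry⟩ := hy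
    refine ⟨Finset.mem_univ _, ?_, (hres π hopt y).trans hry⟩
    rcases hopt y with hc | hc | hc
    · have hgap : t + m ≤ (y : ℕ) := mod_gap hm hty (htm.trans hry.symm)
      by_cases hyx : (y : ℕ) = (u : ℕ) + k * m
      · exfalso
        have hyx' : y = x := by
          apply Fin.ext
          rw [hyx, hx]
        apply hcon
        rw [← hyx']
        omega
      · omega
    · omega
    · omega
  have hπu : π u ∈ D := by
    rw [hD, Finset.mem_filter]
    exact ⟨Finset.mem_univ _, by omega, hres π hopt u⟩
  have hfin := keyD π D hmap u hπu
  rw [hD, Finset.mem_filter] at hfin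
  omega

lemma key2 {N j m : ℕ} (hm : 1 ≤ m) (π : Equiv.Perm (Fin N))
    (hopt : ∀ i : Fin N, (π i : ℕ) + m = i ∨ (π i : ℕ) = i ∨ (π i : ℕ) = (i : ℕ) + j * m)
    (x : Fin N) (hx : (π x : ℕ) + m = (x : ℕ)) :
    ∃ u : Fin N, ∃ k, (π u : ℕ) = (u : ℕ) + j * m ∧ 1 ≤ k ∧ k ≤ j ∧
      (x : ℕ) = (u : ℕ) + k * m := by
  set t : ℕ := (π x : ℕ) with ht
  set D : Finset (Fin N) :=
    Finset.univ.filter (fun y : Fin N => (y : ℕ) ≤ t ∧ (y : ℕ) % m = (x : ℕ) % m) with hD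
  have hnot : ¬ ∀ y ∈ D, π y ∈ D := by
    intro hmap
    have hxD := keyD π D hmap x (by
      rw [hD, Finset.mem_filter]
      exact ⟨Finset.mem_univ _, le_rfl, hres π hopt x⟩)
    rw [hD, Finset.mem_filter] at hxD
    omega
  push_neg at hnot
  obtain ⟨u, huD, hπu⟩ := hnot
  rw [hD, Finset.mem_filter] at huD hπu
  have hres_u : (π u : ℕ) % m = (x : ℕ) % m := (hres π hopt u).trans huD.2.2
  have htu : t < (π u : ℕ) := by
    by_contra hle
    exact hπu ⟨Finset.mem_univ _, by omega, hres_u⟩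
  rcases hopt u with hc | hc | hc
  · have := huD.2.1; omega
  · have := huD.2.1; omega
  · have hux : (u : ℕ) + m ≤ (x : ℕ) := mod_gap hm (by have := huD.2.1; omega) huD.2.2
    have hdvd : m ∣ (x : ℕ) - (u : ℕ) := (Nat.modEq_iff_dvd' (by omega)).mp huD.2.2
    obtain ⟨c, hcm⟩ := hdvd
    have hcomm : c * m = m * c := Nat.mul_comm c m
    refine ⟨u, c, hc, ?_, ?_, by omega⟩
    · rcases Nat.eq_zero_or_pos c with h0 | h0
      · subst h0; simp at hcm; omega
      · exact h0
    · by_contra hcj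
      have hle : (j + 1) * m ≤ m * c := by
        calc (j + 1) * m = m * (j + 1) := Nat.mul_comm _ _
          _ ≤ m * c := Nat.mul_le_mul le_rfl (by omega)
      have hj1 : (j + 1) * m = j * m + m := by ring
      have := huD.2.1
      omega

noncomputable def Gset {N : ℕ} (j m : ℕ) (π : Equiv.Perm (Fin N)) : Finset ℕ :=
  (Finset.univ.filter (fun i : Fin N => (π i : ℕ) = (i : ℕ) + j * m)).image
    (fun i : Fin N => (i : ℕ) + 1)

lemma mem_Gset {N j m : ℕ} {π : Equiv.Perm (Fin N)} {a : ℕ} :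
    a ∈ Gset j m π ↔ ∃ i : Fin N, (π i : ℕ) = (i : ℕ) + j * m ∧ (i : ℕ) + 1 = a := by
  simp [Gset]

lemma Fperm_prop (n j m : ℕ) (hj : 1 ≤ j) (hm : 1 ≤ m) (A : Finset ℕ)
    (hA : A ⊆ Finset.Icc 1 n)
    (hne : ∀ a ∈ A, ∀ b ∈ A, ∀ k, 1 ≤ k → k ≤ j → a ≠ b + k * m) :
    ∀ i, ((Fperm n j m hj hm A hA hne i : ℤ) - (i : ℤ)) ∈
      ({-(m : ℤ), 0, (j * m : ℤ)} : Set ℤ) := by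
  intro i
  have hA1 : ∀ a ∈ A, 1 ≤ a := fun a ha => (Finset.mem_Icc.mp (hA ha)).1
  have happ : ((Fperm n j m hj hm A hA hne i : ℕ) : ℤ) = ((pfun A j m i : ℕ) : ℤ) := by
    rw [Fperm_apply]
  simp only [Set.mem_insert_iff, Set.mem_singleton_iff]
  rcases pfun_cases (j := j) (m := m) hA1 (i : ℕ) with ⟨_, hp⟩ | ⟨hxm, hp⟩ | hp
  · right; right
    have : ((pfun A j m i : ℕ) : ℤ) = (i : ℕ) + (j : ℤ) * m := by
      rw [hp]; push_cast; ring
    push_cast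
    push_cast at happ this
    omega
  · left
    have : ((pfun A j m i : ℕ) : ℤ) + m = ((i : ℕ) : ℤ) := by exact_mod_cast hp
    push_cast
    push_cast at happ this
    omega
  · right; left
    have : ((pfun A j m i : ℕ) : ℤ) = ((i : ℕ) : ℤ) := by exact_mod_cast hp
    push_cast
    push_cast at happ this
    omega

lemma Gset_sub {n j m : ℕ} (π : Equiv.Perm (Fin (n + j * m))) :
    Gset j m π ⊆ Finset.Icc 1 n := by
  intro a ha
  obtain ⟨i, hi, hia⟩ := mem_Gset.mp ha
  have h1 := (π i).isLt
  rw [Finset.mem_Icc]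
  omega

lemma Gset_avoid {n j m : ℕ} (hm : 1 ≤ m) (π : Equiv.Perm (Fin (n + j * m)))
    (hopt : ∀ i : Fin (n + j * m), (π i : ℕ) + m = i ∨ (π i : ℕ) = i ∨
      (π i : ℕ) = (i : ℕ) + j * m) :
    ∀ x ∈ Gset j m π, ∀ y ∈ Gset j m π, x < y →
      y - x ∉ (Finset.Icc 1 j).image (· * m) := by
  intro x hx y hy hxy hmem
  obtain ⟨k, hk, hkm⟩ := Finset.mem_image.mp hmem
  rw [Finset.mem_Icc] at hk
  obtain ⟨u, hu, hux⟩ := mem_Gset.mp hx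
  obtain ⟨v, hv, hvy⟩ := mem_Gset.mp hy
  have hveq : (v : ℕ) = (u : ℕ) + k * m := by omega
  have hlt : (u : ℕ) + k * m < n + j * m := by rw [← hveq]; exact v.isLt
  have hkey := key1 hm π hopt u hu k hk.1 hk.2 hlt
  have hxv : (⟨(u : ℕ) + k * m, hlt⟩ : Fin (n + j * m)) = v := by
    apply Fin.ext; exact hveq.symm
  rw [hxv] at hkey
  omega

lemma Gset_Fperm (n j m : ℕ) (hj : 1 ≤ j) (hm : 1 ≤ m) (A : Finset ℕ)
    (hA : A ⊆ Finset.Icc 1 n)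
    (hne : ∀ a ∈ A, ∀ b ∈ A, ∀ k, 1 ≤ k → k ≤ j → a ≠ b + k * m) :
    Gset j m (Fperm n j m hj hm A hA hne) = A := by
  have hA1 : ∀ a ∈ A, 1 ≤ a := fun a ha => (Finset.mem_Icc.mp (hA ha)).1
  have hjm : 1 ≤ j * m := Nat.mul_pos hj hm
  ext a
  rw [mem_Gset]
  constructor
  · rintro ⟨i, hi, hia⟩
    rw [Fperm_apply] at hi
    rcases pfun_cases (j := j) (m := m) hA1 (i : ℕ) with ⟨hmem, hp⟩ | ⟨hxm, hp⟩ | hp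
    · rwa [← hia]
    · omega
    · omega
  · intro ha
    have hb := Finset.mem_Icc.mp (hA ha)
    refine ⟨⟨a - 1, by omega⟩, ?_, by simp only [Fin.val_mk]; omega⟩
    rw [Fperm_apply]
    show pfun A j m (a - 1) = (a - 1) + j * m
    unfold pfun
    rw [if_pos (show a - 1 + 1 ∈ A by rw [show a - 1 + 1 = a by omega]; exact ha)]

lemma pfun_Gset {n j m : ℕ} (hm : 1 ≤ m) (π : Equiv.Perm (Fin (n + j * m)))
    (hopt : ∀ i : Fin (n + j * m), (π i : ℕ) + m = i ∨ (π i : ℕ) = i ∨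
      (π i : ℕ) = (i : ℕ) + j * m) (x : Fin (n + j * m)) :
    pfun (Gset j m π) j m (x : ℕ) = (π x : ℕ) := by
  unfold pfun
  split_ifs with h1 h2
  · obtain ⟨i, hi, hix⟩ := mem_Gset.mp h1
    have hix' : i = x := by apply Fin.ext; omega
    rw [hix'] at hi
    omega
  · obtain ⟨a, ha, k, hk1, hkj, heq⟩ := h2
    obtain ⟨u, hu, hua⟩ := mem_Gset.mp ha
    have hx : (x : ℕ) = (u : ℕ) + k * m := by omega
    have hlt : (u : ℕ) + k * m < n + j * m := by rw [← hx]; exact x.isLt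
    have hkey := key1 hm π hopt u hu k hk1 hkj hlt
    have hxeq : (⟨(u : ℕ) + k * m, hlt⟩ : Fin (n + j * m)) = x := by
      apply Fin.ext; exact hx.symm
    rw [hxeq] at hkey
    omega
  · rcases hopt x with hc | hc | hc
    · exfalso
      obtain ⟨u, k, hu, hk1, hkj, hx⟩ := key2 hm π hopt x hc
      exact h2 ⟨(u : ℕ) + 1, mem_Gset.mpr ⟨u, hu, rfl⟩, k, hk1, hkj, by omega⟩
    · omega
    · exact absurd (mem_Gset.mpr ⟨x, hc, rfl⟩) h1

lemma count_lemma (n j m : ℕ) (hj : 1 ≤ j) (hm : 1 ≤ m) (A : Finset ℕ)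
    (hA : A ⊆ Finset.Icc 1 n)
    (hne : ∀ a ∈ A, ∀ b ∈ A, ∀ k, 1 ≤ k → k ≤ j → a ≠ b + k * m) :
    (Finset.univ.filter
      (fun i : Fin (n + j * m) => i < Fperm n j m hj hm A hA hne i)).card = A.card := by
  classical
  have hA1 : ∀ a ∈ A, 1 ≤ a := fun a ha => (Finset.mem_Icc.mp (hA ha)).1
  have hjm : 1 ≤ j * m := Nat.mul_pos hj hm
  have hfilter : (Finset.univ.filter
      (fun i : Fin (n + j * m) => i < Fperm n j m hj hm A hA hne i))
      = Finset.univ.filter (fun i : Fin (n + j * m) => (i : ℕ) + 1 ∈ A) := by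
    apply Finset.filter_congr
    intro i _
    rw [Fin.lt_def]
    have happ : (Fperm n j m hj hm A hA hne i : ℕ) = pfun A j m i := Fperm_apply ..
    constructor
    · intro hlt
      rw [happ] at hlt
      rcases pfun_cases (j := j) (m := m) hA1 (i : ℕ) with ⟨hmem, hp⟩ | ⟨hxm, hp⟩ | hp
      · exact hmem
      · omega
      · omega
    · intro hmem
      rw [happ]
      have hp : pfun A j m i = (i : ℕ) + j * m := by
        unfold pfun; rw [if_pos hmem]
      omega
  rw [hfilter]
  apply Finset.card_bij (fun (i : Fin (n + j * m)) _ => (i : ℕ) + 1)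
  · intro i hi
    exact (Finset.mem_filter.mp hi).2
  · intro a ha b hb hab
    apply Fin.ext; omega
  · intro a ha
    have hb := Finset.mem_Icc.mp (hA ha)
    refine ⟨⟨a - 1, by omega⟩, Finset.mem_filter.mpr ⟨Finset.mem_univ _, ?_⟩, by simp only [Fin.val_mk]; omega⟩
    show a - 1 + 1 ∈ A
    rw [show a - 1 + 1 = a by omega]
    exact ha

end Stmt15Aux

/-- For `j, m ≥ 1` there is a bijection between subsets of `{1,...,n}` avoiding pairwise
differences in `{m, 2m, ..., jm}` and permutations `π` of `{1,...,n+jm}` with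
`π(i) - i ∈ {-m, 0, jm}` for all `i`, under which `k`-element subsets correspond to
permutations with exactly `k` excedances. -/
theorem stmt_15 (n j m : ℕ) (hj : 1 ≤ j) (hm : 1 ≤ m) :
    ∃ e : {A : Finset ℕ // A ⊆ Finset.Icc 1 n ∧
            ∀ x ∈ A, ∀ y ∈ A, x < y → y - x ∉ (Finset.Icc 1 j).image (· * m)} ≃
          {π : Equiv.Perm (Fin (n + j * m)) //
            ∀ i, ((π i : ℤ) - (i : ℤ)) ∈ ({-(m : ℤ), 0, (j * m : ℤ)} : Set ℤ)},
      ∀ A, (Finset.univ.filter (fun i : Fin (n + j * m) => i < (e A : Equiv.Perm _) i)).card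
        = (A : Finset ℕ).card := by
  classical
  open Stmt15Aux in
  refine ⟨{
      toFun := fun A =>
        ⟨Fperm n j m hj hm A.1 A.2.1 (hne_of hm A.2.2),
         Fperm_prop n j m hj hm A.1 A.2.1 (hne_of hm A.2.2)⟩,
      invFun := fun p =>
        ⟨Gset j m p.1, Gset_sub p.1, Gset_avoid hm p.1 (fun i => hopt_of p.1 p.2 i)⟩,
      left_inv := ?_, right_inv := ?_ }, ?_⟩
  · intro A
    apply Subtype.ext
    exact Gset_Fperm n j m hj hm A.1 A.2.1 (hne_of hm A.2.2)
  · intro p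
    apply Subtype.ext
    apply Equiv.ext
    intro x
    apply Fin.ext
    exact pfun_Gset hm p.1 (fun i => hopt_of p.1 p.2 i) x
  · intro A
    exact count_lemma n j m hj hm A.1 A.2.1 (hne_of hm A.2.2)
end

section
/- For m ≥ 2, there is a bijection between the k-element subsets of {1,...,n} in which no two elements differ by 1 or by m, and the permutations π of {1,...,n+1} consisting of k non-overlapping adjacent transpositions (i.e., π is an involution that is a product of k disjoint transpositions of the form (i, i+1)) such that for all i with 1 ≤ i ≤ n+2-m, max_{0≤j≤m-1} π(i+j) - min_{0≤j≤m-1} π(i+j) ≤ m. -/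
private def piOf (A : Finset ℕ) (x : ℕ) : ℕ :=
  if x ∈ A then x + 1 else if x - 1 ∈ A then x - 1 else x

private lemma piOf_tri (A : Finset ℕ) (hA : ∀ x ∈ A, 1 ≤ x) (x : ℕ) :
    (x ∈ A ∧ piOf A x = x + 1) ∨ (x ∉ A ∧ x - 1 ∉ A ∧ piOf A x = x) ∨
    (x ∉ A ∧ x - 1 ∈ A ∧ 2 ≤ x ∧ piOf A x + 1 = x) := by
  by_cases h1 : x ∈ A
  · exact Or.inl ⟨h1, by simp [piOf, h1]⟩
  · by_cases h2 : x - 1 ∈ A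
    · have := hA _ h2
      exact Or.inr (Or.inr ⟨h1, h2, by omega, by simp [piOf, h1, h2]; omega⟩)
    · exact Or.inr (Or.inl ⟨h1, h2, by simp [piOf, h1, h2]⟩)

private lemma piOf_invol (A : Finset ℕ) (hA : ∀ x ∈ A, 1 ≤ x)
    (hsep : ∀ x ∈ A, x + 1 ∉ A) (x : ℕ) :
    piOf A (piOf A x) = x := by
  rcases piOf_tri A hA x with ⟨h, he⟩ | ⟨h1, h2, he⟩ | ⟨h1, h2, hx, he⟩
  · rw [he]
    have h3 : x + 1 ∉ A := hsep _ h
    simp [piOf, h3, h]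
  · rw [he, he]
  · have hx1 : piOf A x = x - 1 := by omega
    rw [hx1]
    simp only [piOf, if_pos h2]
    omega

private lemma filter_piOf (n : ℕ) (A : Finset ℕ) (hA1 : ∀ x ∈ A, 1 ≤ x)
    (hAn : ∀ x ∈ A, x ≤ n) :
    (Finset.Icc 1 n).filter (fun i => piOf A i = i + 1) = A := by
  ext i
  simp only [Finset.mem_filter, Finset.mem_Icc]
  constructor
  · rintro ⟨hi, hp⟩
    rcases piOf_tri A hA1 i with h | h | h
    · exact h.1
    · omega
    · omega
  · intro hi
    exact ⟨⟨hA1 _ hi, hAn _ hi⟩, by simp [piOf, hi]⟩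

private lemma piOf_props (n m k : ℕ) (hm : 2 ≤ m) (A : Finset ℕ)
    (hsub : A ⊆ Finset.Icc 1 n) (hcard : A.card = k)
    (hdiff : ∀ x ∈ A, ∀ y ∈ A, x < y → y - x ≠ 1 ∧ y - x ≠ m) :
    Set.BijOn (piOf A) (Set.Icc 1 (n + 1)) (Set.Icc 1 (n + 1)) ∧
    (∀ i, i ∉ Set.Icc 1 (n + 1) → piOf A i = i) ∧
    (∀ i ∈ Set.Icc 1 (n + 1), piOf A (piOf A i) = i) ∧
    (∀ i ∈ Set.Icc 1 (n + 1), piOf A i = i ∨ piOf A i = i + 1 ∨ piOf A i + 1 = i) ∧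
    (∀ i, 1 ≤ i → i + m ≤ n + 2 →
      ∀ j < m, ∀ j' < m, piOf A (i + j) ≤ piOf A (i + j') + m) ∧
    ((Finset.Icc 1 n).filter (fun i => piOf A i = i + 1)).card = k := by
  have hA1 : ∀ x ∈ A, 1 ≤ x := fun x hx => (Finset.mem_Icc.1 (hsub hx)).1
  have hAn : ∀ x ∈ A, x ≤ n := fun x hx => (Finset.mem_Icc.1 (hsub hx)).2
  have hsep : ∀ x ∈ A, x + 1 ∉ A := fun x hx hx1 =>
    (hdiff x hx (x + 1) hx1 (by omega)).1 (by omega)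
  have hinv := piOf_invol A hA1 hsep
  have hmaps : ∀ x ∈ Set.Icc 1 (n + 1), piOf A x ∈ Set.Icc 1 (n + 1) := by
    intro x hx
    simp only [Set.mem_Icc] at hx ⊢
    rcases piOf_tri A hA1 x with h | h | h
    · have := hAn _ h.1; omega
    · omega
    · omega
  refine ⟨⟨hmaps, ?_, ?_⟩, ?_, fun i _ => hinv i, ?_, ?_, ?_⟩
  · intro x _ y _ hxy
    have := hinv x
    rw [hxy, hinv y] at this
    exact this.symm
  · intro y hy
    exact ⟨piOf A y, hmaps y hy, hinv y⟩
  · intro i hi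
    simp only [Set.mem_Icc, not_and_or, not_le] at hi
    rcases piOf_tri A hA1 i with h | h | h
    · exfalso
      have h1 := hA1 _ h.1; have h2 := hAn _ h.1
      omega
    · exact h.2.2
    · exfalso
      have h1 := hA1 _ h.2.1; have h2 := hAn _ h.2.1
      omega
  · intro i _
    rcases piOf_tri A hA1 i with h | h | h
    · exact Or.inr (Or.inl h.2)
    · exact Or.inl h.2.2
    · exact Or.inr (Or.inr h.2.2.2)
  · intro i hi1 hi2 j hj j' hj'
    rcases piOf_tri A hA1 (i + j) with ha | ha | ha <;>
      rcases piOf_tri A hA1 (i + j') with hb | hb | hb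
    · omega
    · omega
    · -- a swaps up, b swaps down: possibly bad case
      by_cases hc : j + 2 ≤ j' + m
      · omega
      · exfalso
        have hlt : i + j' - 1 < i + j := by omega
        have := hdiff _ hb.2.1 _ ha.1 hlt
        omega
    · omega
    · omega
    · omega
    · omega
    · omega
    · omega
  · rw [filter_piOf n A hA1 hAn]
    exact hcard

/-- For `m ≥ 2` there is a bijection between `k`-element subsets of `{1,...,n}` in which
no two elements differ by 1 or by `m`, and permutations `π` of `{1,...,n+1}` which are
involutions consisting of `k` non-overlapping adjacent transpositions and which satisfy,
for all `1 ≤ i ≤ n+2-m`,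
`max_{0≤j≤m-1} π(i+j) - min_{0≤j≤m-1} π(i+j) ≤ m`. -/
theorem stmt_16 (n m k : ℕ) (hm : 2 ≤ m) :
    Nonempty
      ({A : Finset ℕ // A ⊆ Finset.Icc 1 n ∧ A.card = k ∧
          ∀ x ∈ A, ∀ y ∈ A, x < y → y - x ≠ 1 ∧ y - x ≠ m} ≃
       {π : ℕ → ℕ //
          Set.BijOn π (Set.Icc 1 (n + 1)) (Set.Icc 1 (n + 1)) ∧
          (∀ i, i ∉ Set.Icc 1 (n + 1) → π i = i) ∧
          (∀ i ∈ Set.Icc 1 (n + 1), π (π i) = i) ∧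
          (∀ i ∈ Set.Icc 1 (n + 1), π i = i ∨ π i = i + 1 ∨ π i + 1 = i) ∧
          (∀ i, 1 ≤ i → i + m ≤ n + 2 →
            ∀ j < m, ∀ j' < m, π (i + j) ≤ π (i + j') + m) ∧
          ((Finset.Icc 1 n).filter (fun i => π i = i + 1)).card = k}) := by
  constructor
  refine
    { toFun := fun A => ⟨piOf A.1, piOf_props n m k hm A.1 A.2.1 A.2.2.1 A.2.2.2⟩
      invFun := fun p => ⟨(Finset.Icc 1 n).filter (fun i => p.1 i = i + 1), ?_, ?_, ?_⟩
      left_inv := ?_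
      right_inv := ?_ }
  · exact Finset.filter_subset _ _
  · exact p.2.2.2.2.2.2
  · -- difference conditions
    obtain ⟨hbij, hfix, hinv, hadj, hcond, hcard⟩ := p.2
    intro x hx y hy hxy
    simp only [Finset.mem_filter, Finset.mem_Icc] at hx hy
    constructor
    · intro h1
      -- y = x + 1
      have hxi : x ∈ Set.Icc 1 (n + 1) := by simp only [Set.mem_Icc]; omega
      have := hinv x hxi
      rw [hx.2] at this
      have hy' : y = x + 1 := by omega
      rw [← hy'] at this
      rw [hy.2] at this
      omega
    · intro h1
      -- y = x + m
      have hx1 : x + 1 ≥ 1 := by omega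
      have hx2 : x + 1 + m ≤ n + 2 := by omega
      have hc := hcond (x + 1) hx1 hx2 (m - 1) (by omega) 0 (by omega)
      have he1 : x + 1 + (m - 1) = y := by omega
      have he2 : x + 1 + 0 = x + 1 := by omega
      rw [he1, he2] at hc
      have hxi : x ∈ Set.Icc 1 (n + 1) := by simp only [Set.mem_Icc]; omega
      have h2 := hinv x hxi
      rw [hx.2] at h2
      rw [hy.2] at hc
      omega
  · -- left_inv
    intro A
    apply Subtype.ext
    have hA1 : ∀ x ∈ A.1, 1 ≤ x := fun x hx => (Finset.mem_Icc.1 (A.2.1 hx)).1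
    have hAn : ∀ x ∈ A.1, x ≤ n := fun x hx => (Finset.mem_Icc.1 (A.2.1 hx)).2
    exact filter_piOf n A.1 hA1 hAn
  · -- right_inv
    intro p
    apply Subtype.ext
    obtain ⟨hbij, hfix, hinv, hadj, hcond, hcard⟩ := p.2
    funext x
    show piOf ((Finset.Icc 1 n).filter (fun i => p.1 i = i + 1)) x = p.1 x
    set A := (Finset.Icc 1 n).filter (fun i => p.1 i = i + 1) with hAdef
    have hmemA : ∀ i, i ∈ A ↔ (1 ≤ i ∧ i ≤ n) ∧ p.1 i = i + 1 := by
      intro i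
      simp [hAdef, Finset.mem_filter, Finset.mem_Icc]
    by_cases hx1 : x ∈ A
    · have h := (hmemA x).1 hx1
      simp only [piOf, if_pos hx1]
      omega
    · by_cases hx2 : x - 1 ∈ A
      · have h := (hmemA (x - 1)).1 hx2
        have hxx : x - 1 + 1 = x := by omega
        have hxi : x - 1 ∈ Set.Icc 1 (n + 1) := by simp only [Set.mem_Icc]; omega
        have h2 := hinv (x - 1) hxi
        rw [h.2, hxx] at h2
        simp only [piOf, if_neg hx1, if_pos hx2]
        omega
      · simp only [piOf, if_neg hx1, if_neg hx2]
        by_cases hxi : x ∈ Set.Icc 1 (n + 1)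
        · rcases hadj x hxi with h | h | h
          · omega
          · exfalso
            have hb := hbij.mapsTo hxi
            simp only [Set.mem_Icc] at hb hxi
            rw [h] at hb
            have hxn : x ≤ n := by omega
            exact hx1 ((hmemA x).2 ⟨⟨hxi.1, hxn⟩, h⟩)
          · exfalso
            have hb := hbij.mapsTo hxi
            simp only [Set.mem_Icc] at hb hxi
            have h2 := hinv x hxi
            have hpx : p.1 x = x - 1 := by omega
            rw [hpx] at h2
            apply hx2
            apply (hmemA (x - 1)).2
            refine ⟨⟨by omega, by omega⟩, by omega⟩
        · exact (hfix x hxi).symm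
end
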